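/- Small Cross Over Lemma: if g is a quasi-isometry from string α to string β with constants A and B, then there is a constant C ≤ 0 such that for all n < m, g(m) − g(n) ≥ C. -/

import Mathlib

def IsQI {Γ : Type*} (α β : ℕ → Γ) (f : ℕ → ℕ) (A B : ℝ) : Prop :=
  1 ≤ A ∧ 0 ≤ B ∧ (∀ n, α n = β (f n)) ∧
  (∀ x y : ℕ, (1 / A) * |(x : ℝ) - (y : ℝ)| - B ≤ |(f x : ℝ) - (f y : ℝ)| ∧
      |(f x : ℝ) - (f y : ℝ)| ≤ A * |(x : ℝ) - (y : ℝ)| + B) ∧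
  (∀ m : ℕ, ∃ x : ℕ, |(m : ℝ) - (f x : ℝ)| ≤ A)

/-- `α ≤_QI β`: there is a quasi-isometry from `α` to `β`. -/
def QI {Γ : Type*} (α β : ℕ → Γ) : Prop := ∃ f A B, IsQI α β f A B

/-- Discrete intermediate value: a path with steps of size ≤ s that goes from
below `v` to above `v` passes within `s` of `v`. -/
lemma cross_aux (G : ℕ → ℤ) (s : ℤ) (hs : ∀ k, |G (k+1) - G k| ≤ s)
    (a b : ℕ) (hab : a ≤ b) (v : ℤ) (h1 : G a ≤ v) (h2 : v ≤ G b) :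
    ∃ j, a ≤ j ∧ j ≤ b ∧ |G j - v| ≤ s := by
  have hs0 : 0 ≤ s := le_trans (abs_nonneg _) (hs 0)
  classical
  have hex : ∃ j, a ≤ j ∧ v ≤ G j := ⟨b, hab, h2⟩
  obtain ⟨hja, hjv⟩ := Nat.find_spec hex
  set j := Nat.find hex with hj
  have hjb : j ≤ b := Nat.find_min' hex ⟨hab, h2⟩
  rcases eq_or_lt_of_le hja with heq | hlt
  · refine ⟨j, hja, hjb, ?_⟩
    have hGj : G j = v := le_antisymm (heq ▸ h1) hjv
    simp [hGj, hs0]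
  · have hmin := Nat.find_min hex (m := j - 1) (by omega)
    have h3 : G (j-1) < v := by
      by_contra hcc
      exact hmin ⟨by omega, le_of_not_gt hcc⟩
    have h4 := hs (j-1)
    rw [show j - 1 + 1 = j by omega] at h4
    have h5 := abs_le.mp h4
    refine ⟨j, hja, hjb, ?_⟩
    rw [abs_le]
    omega

set_option maxHeartbeats 1000000 in
/-- Small Cross Over Lemma: a quasi-isometry `g : α → β` has a uniform bound
`C ≤ 0` on cross-overs: for all `n < m`, `g m - g n ≥ C` (in `ℤ`). -/
theorem small_cross_over {Γ : Type*} (α β : ℕ → Γ) (g : ℕ → ℕ) (A B : ℝ)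
    (h : IsQI α β g A B) :
    ∃ C : ℤ, C ≤ 0 ∧ ∀ n m : ℕ, n < m → C ≤ (g m : ℤ) - (g n : ℤ) := by
  obtain ⟨hA, hB, -, hbound, -⟩ := h
  have hA0 : (0:ℝ) < A := lt_of_lt_of_le one_pos hA
  set s : ℤ := ⌈A + B⌉ with hs_def
  have hsR : A + B ≤ (s : ℝ) := Int.le_ceil _
  have hs1 : (1:ℤ) ≤ s := by
    have : (1:ℝ) ≤ (s:ℝ) := by linarith
    exact_mod_cast this
  -- step bound
  have hstep : ∀ k, |(g (k+1) : ℤ) - (g k : ℤ)| ≤ s := by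
    intro k
    have h1 := (hbound (k+1) k).2
    have h2 : |((k+1 : ℕ) : ℝ) - (k : ℝ)| = 1 := by
      push_cast; simp
    rw [h2, mul_one] at h1
    have h3 : (|(g (k+1) : ℤ) - (g k : ℤ)| : ℝ) ≤ (s : ℝ) := by
      push_cast
      calc |((g (k+1) : ℝ)) - (g k : ℝ)| ≤ A + B := h1
        _ ≤ (s:ℝ) := hsR
    exact_mod_cast h3
  have h2sB : (0:ℝ) ≤ 2*(s:ℝ) + B := by
    have : (1:ℝ) ≤ (s:ℝ) := by exact_mod_cast hs1
    linarith
  set d : ℤ := s + ⌈B⌉ + ⌈A*A*(2*(s:ℝ)+B)⌉ + 1 with hd_def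
  have hd_ge : (s:ℝ) + B + A*A*(2*(s:ℝ)+B) + 1 ≤ (d:ℝ) := by
    have hc1 : B ≤ ((⌈B⌉:ℤ):ℝ) := Int.le_ceil _
    have hc2 : A*A*(2*(s:ℝ)+B) ≤ ((⌈A*A*(2*(s:ℝ)+B)⌉:ℤ):ℝ) := Int.le_ceil _
    rw [hd_def]
    push_cast
    linarith
  have hd0 : (0:ℤ) ≤ d := by
    have hr : (0:ℝ) ≤ (d:ℝ) := by nlinarith
    exact_mod_cast hr
  refine ⟨-(2*d), by omega, ?_⟩
  intro n m hnm
  by_contra hcon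
  push_neg at hcon
  -- so g n - g m > 2 d
  have hdrop : (g m : ℤ) + 2*d < (g n : ℤ) := by omega
  set v : ℤ := (g m : ℤ) + d with hv_def
  have hv0 : 0 ≤ v := by positivity
  -- downward crossing on [n, m]
  obtain ⟨j, hjn, hjm, hjv⟩ := cross_aux (fun x => -((g x : ℤ))) s
    (fun k => by
      rw [show -((g (k+1) : ℤ)) - -((g k : ℤ)) = -((g (k+1) : ℤ) - (g k : ℤ)) by ring,
        abs_neg]
      exact hstep k) n m (le_of_lt hnm) (-v)
    (by simp; omega) (by simp; omega)
  have hjv' : |(g j : ℤ) - v| ≤ s := by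
    have he : -((g j : ℤ)) - (-v) = -((g j : ℤ) - v) := by ring
    rw [abs_sub_comm]
    simpa [he, abs_neg] using hjv
  -- find X ≥ m with g X ≥ v
  set T : ℝ := (g n : ℝ) + (v : ℝ) + 1 with hT_def
  have hT0 : 0 < T := by
    have : (0:ℝ) ≤ (v:ℝ) := by exact_mod_cast hv0
    positivity
  set X : ℕ := m + ⌈A*(T+B)⌉₊ + 1 with hX_def
  have hmX : m ≤ X := by omega
  have hXn : A*(T+B) ≤ (X:ℝ) - (n:ℝ) := by
    have h1 : A*(T+B) ≤ (⌈A*(T+B)⌉₊ : ℝ) := Nat.le_ceil _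
    have h2 : (n:ℝ) + 1 ≤ (m:ℝ) + 1 := by
      have : (n:ℝ) ≤ (m:ℝ) := by exact_mod_cast le_of_lt hnm
      linarith
    rw [hX_def]
    push_cast
    linarith
  have hgX : v ≤ (g X : ℤ) := by
    have h1 := (hbound X n).1
    have habs : |(X : ℝ) - (n : ℝ)| = (X:ℝ) - (n:ℝ) := by
      rw [abs_of_nonneg]
      nlinarith
    rw [habs] at h1
    have h2 : T ≤ (1/A) * ((X:ℝ) - (n:ℝ)) - B := by
      rw [div_mul_eq_mul_div, one_mul, le_sub_iff_add_le, le_div_iff₀ hA0]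
      nlinarith
    have h3 : T ≤ |(g X : ℝ) - (g n : ℝ)| := le_trans h2 h1
    have hgX0 : (0:ℝ) ≤ (g X : ℝ) := by positivity
    have hgn0 : (0:ℝ) ≤ (g n : ℝ) := by positivity
    have hvr : (0:ℝ) ≤ (v:ℝ) := by exact_mod_cast hv0
    have h4 : (v:ℝ) ≤ (g X : ℝ) := by
      rcases abs_cases ((g X : ℝ) - (g n : ℝ)) with ⟨he, -⟩ | ⟨he, -⟩ <;>
        rw [he] at h3 <;> [skip; skip] <;>
      · rw [hT_def] at h3; linarith
    exact_mod_cast h4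
  -- upward crossing on [m, X]
  obtain ⟨k, hkm, hkX, hkv⟩ := cross_aux (fun x => (g x : ℤ)) s hstep m X hmX v
    (by show (g m : ℤ) ≤ v; omega) hgX
  -- now derive the contradiction over ℝ
  have hjvR : |(g j : ℝ) - (v:ℝ)| ≤ (s:ℝ) := by exact_mod_cast hjv'
  have hkvR : |(g k : ℝ) - (v:ℝ)| ≤ (s:ℝ) := by exact_mod_cast hkv
  have hjR := abs_le.mp hjvR
  have hkR := abs_le.mp hkvR
  have hvm : (v:ℝ) - (g m : ℝ) = (d:ℝ) := by
    rw [hv_def]; push_cast; ring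
  -- |g j - g m| ≥ d - s, so m - j ≥ (d - s - B)/A
  have hub_j := (hbound j m).2
  have hub_k := (hbound k m).2
  have hjmR : (j:ℝ) ≤ (m:ℝ) := by exact_mod_cast hjm
  have hkmR : (m:ℝ) ≤ (k:ℝ) := by exact_mod_cast hkm
  have habsj : |(j : ℝ) - (m : ℝ)| = (m:ℝ) - (j:ℝ) := by
    rw [abs_sub_comm, abs_of_nonneg]; linarith
  have habsk : |(k : ℝ) - (m : ℝ)| = (k:ℝ) - (m:ℝ) := by
    rw [abs_of_nonneg]; linarith
  rw [habsj] at hub_j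
  rw [habsk] at hub_k
  have h6 : |(v:ℝ) - (g m:ℝ)| = (d:ℝ) := by
    rw [hvm]; exact abs_of_nonneg (by exact_mod_cast hd0)
  have hdj : (d:ℝ) - (s:ℝ) ≤ |(g j : ℝ) - (g m : ℝ)| := by
    have h9 := abs_sub_abs_le_abs_sub ((v:ℝ) - (g m : ℝ)) ((v:ℝ) - (g j : ℝ))
    have h10 : |(v:ℝ) - (g m : ℝ) - ((v:ℝ) - (g j : ℝ))| = |(g j:ℝ) - (g m:ℝ)| := by
      ring_nf
    have h5 : |(v:ℝ) - (g j : ℝ)| ≤ (s:ℝ) := by rw [abs_sub_comm]; exact hjvR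
    rw [h6, h10] at h9
    linarith
  have hdk : (d:ℝ) - (s:ℝ) ≤ |(g k : ℝ) - (g m : ℝ)| := by
    have h9 := abs_sub_abs_le_abs_sub ((v:ℝ) - (g m : ℝ)) ((v:ℝ) - (g k : ℝ))
    have h10 : |(v:ℝ) - (g m : ℝ) - ((v:ℝ) - (g k : ℝ))| = |(g k:ℝ) - (g m:ℝ)| := by
      ring_nf
    have h5 : |(v:ℝ) - (g k : ℝ)| ≤ (s:ℝ) := by rw [abs_sub_comm]; exact hkvR
    rw [h6, h10] at h9
    linarith
  -- lower bound on |g k - g j|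
  have hlb := (hbound k j).1
  have habskj : |(k : ℝ) - (j : ℝ)| = (k:ℝ) - (j:ℝ) := by
    rw [abs_of_nonneg]; linarith
  rw [habskj] at hlb
  have hkj2s : |(g k : ℝ) - (g j : ℝ)| ≤ 2*(s:ℝ) := by
    have := abs_sub ((g k : ℝ) - (v:ℝ)) ((g j : ℝ) - (v:ℝ))
    calc |(g k : ℝ) - (g j : ℝ)| = |((g k : ℝ) - (v:ℝ)) - ((g j : ℝ) - (v:ℝ))| := by
          ring_nf
      _ ≤ |(g k : ℝ) - (v:ℝ)| + |(g j : ℝ) - (v:ℝ)| := abs_sub _ _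
      _ ≤ 2*(s:ℝ) := by linarith
  -- combine
  have hmj : (d:ℝ) - (s:ℝ) - B ≤ A * ((m:ℝ) - (j:ℝ)) := by linarith
  have hmk : (d:ℝ) - (s:ℝ) - B ≤ A * ((k:ℝ) - (m:ℝ)) := by linarith
  have hkjle : (k:ℝ) - (j:ℝ) ≤ A * (2*(s:ℝ) + B) := by
    have h7 : (1/A) * ((k:ℝ) - (j:ℝ)) - B ≤ 2*(s:ℝ) := le_trans hlb hkj2s
    rw [div_mul_eq_mul_div, one_mul, sub_le_iff_le_add, div_le_iff₀ hA0] at h7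
    exact h7.trans_eq (by ring)
  nlinarith [mul_le_mul_of_nonneg_left hkjle (le_of_lt hA0), hd_ge,
    mul_pos hA0 hA0, hmj, hmk]
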